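/- arXiv:math/0604333 — 6 statements merged into one kernel-verified Lean document; each statement's English description precedes it below -/
import Mathlib

section
/- The set of integer points (α₀, α₁, β) ∈ ℤ³ satisfying 0 ≤ α₀ ≤ a, 0 ≤ α₁ ≤ b, and α₀ ≤ β ≤ α₁ + a has cardinality equal to the number of vertices of K(a,b), namely (a+1)(b+1) + (b+1)·a(a+1)/2 + (a+1)·b(b+1)/2. -/
/-- Integer points of the polytope `P(a,b)`, coordinates `(α₀, α₁, β)`. -/
def Ppts (a b : ℕ) : Set (ℤ × ℤ × ℤ) :=
  {t | 0 ≤ t.1 ∧ t.1 ≤ (a : ℤ) ∧ 0 ≤ t.2.1 ∧ t.2.1 ≤ (b : ℤ) ∧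
       t.1 ≤ t.2.2 ∧ t.2.2 ≤ t.2.1 + (a : ℤ)}

private lemma sum_Icc_int_eq (n : ℕ) (f : ℤ → ℕ) :
    ∑ x ∈ Finset.Icc (0:ℤ) n, f x = ∑ i ∈ Finset.range (n+1), f i := by
  refine Finset.sum_nbij' (fun x => x.toNat) (fun i => (i : ℤ)) ?_ ?_ ?_ ?_ ?_ <;>
    intro x hx <;> simp_all [Finset.mem_Icc, Finset.mem_range] <;> omega

private lemma refl_sum (n : ℕ) :
    ∑ i ∈ Finset.range (n+1), (n+1-i) = ∑ i ∈ Finset.range (n+1), (i+1) := by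
  rw [← Finset.sum_range_reflect]
  exact Finset.sum_congr rfl fun j hj => by
    simp only [Finset.mem_range] at hj; omega

private lemma gauss (n : ℕ) : ∑ i ∈ Finset.range (n+1), i = n * (n + 1) / 2 := by
  rw [Finset.sum_range_id]
  simp [Nat.mul_comm]

theorem stmt_6 (a b : ℕ) :
    (Ppts a b).ncard =
      (a + 1) * (b + 1) + (b + 1) * (a * (a + 1) / 2) + (a + 1) * (b * (b + 1) / 2) := by
  classical
  set F : Finset (ℤ × ℤ × ℤ) :=
    (Finset.Icc (0:ℤ) a ×ˢ Finset.Icc (0:ℤ) b).biUnion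
      (fun p => (Finset.Icc p.1 (p.2 + a)).image (fun β => (p.1, p.2, β))) with hF
  have hset : Ppts a b = (F : Set (ℤ × ℤ × ℤ)) := by
    ext ⟨x, y, z⟩
    simp only [Ppts, Set.mem_setOf_eq, hF, Finset.coe_biUnion, Finset.mem_coe,
      Finset.mem_biUnion, Finset.mem_product, Finset.mem_Icc, Finset.mem_image,
      Set.mem_iUnion, Prod.exists, Prod.mk.injEq]
    constructor
    · rintro ⟨h1, h2, h3, h4, h5, h6⟩
      exact ⟨x, y, ⟨⟨h1, h2⟩, h3, h4⟩, z, ⟨h5, h6⟩, rfl, rfl, rfl⟩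
    · rintro ⟨p, q, ⟨⟨h1, h2⟩, h3, h4⟩, w, ⟨h5, h6⟩, rfl, rfl, rfl⟩
      exact ⟨h1, h2, h3, h4, h5, h6⟩
  rw [hset, Set.ncard_coe_finset]
  have hdisj : ∀ p ∈ Finset.Icc (0:ℤ) a ×ˢ Finset.Icc (0:ℤ) b,
      ∀ q ∈ Finset.Icc (0:ℤ) a ×ˢ Finset.Icc (0:ℤ) b, p ≠ q →
      Disjoint ((Finset.Icc p.1 (p.2 + a)).image (fun β => (p.1, p.2, β)))
        ((Finset.Icc q.1 (q.2 + a)).image (fun β => (q.1, q.2, β))) := by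
    intro p _ q _ hpq
    rw [Finset.disjoint_left]
    rintro t ht ht'
    simp only [Finset.mem_image] at ht ht'
    obtain ⟨w, hw, rfl⟩ := ht
    obtain ⟨w', hw', he⟩ := ht'
    have h1 := congrArg Prod.fst he
    have h2 := congrArg (fun t : ℤ × ℤ × ℤ => t.2.1) he
    simp only at h1 h2
    apply hpq
    rw [Prod.ext_iff]
    exact ⟨h1.symm, h2.symm⟩
  rw [hF, Finset.card_biUnion hdisj]
  have hcard : ∀ p : ℤ × ℤ,
      ((Finset.Icc p.1 (p.2 + a)).image (fun β => (p.1, p.2, β))).card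
        = (p.2 + a + 1 - p.1).toNat := by
    intro p
    rw [Finset.card_image_of_injective _ (fun u v h => by
      simpa using congrArg (fun t : ℤ × ℤ × ℤ => t.2.2) h)]
    rw [Int.card_Icc]
  calc ∑ p ∈ Finset.Icc (0:ℤ) a ×ˢ Finset.Icc (0:ℤ) b,
        ((Finset.Icc p.1 (p.2 + a)).image (fun β => (p.1, p.2, β))).card
      = ∑ x ∈ Finset.Icc (0:ℤ) a, ∑ y ∈ Finset.Icc (0:ℤ) b, (y + a + 1 - x).toNat := by
        rw [Finset.sum_product]
        exact Finset.sum_congr rfl fun x _ => Finset.sum_congr rfl fun y _ => hcard (x, y)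
    _ = ∑ i ∈ Finset.range (a+1), ∑ j ∈ Finset.range (b+1), ((j:ℤ) + a + 1 - i).toNat := by
        rw [sum_Icc_int_eq a]
        exact Finset.sum_congr rfl fun i _ => sum_Icc_int_eq b _
    _ = ∑ i ∈ Finset.range (a+1), ∑ j ∈ Finset.range (b+1), (j + (a + 1 - i)) := by
        refine Finset.sum_congr rfl fun i hi => Finset.sum_congr rfl fun j _ => ?_
        simp only [Finset.mem_range] at hi
        omega
    _ = ∑ i ∈ Finset.range (a+1), (b * (b + 1) / 2 + (b + 1) * (a + 1 - i)) := by
        refine Finset.sum_congr rfl fun i _ => ?_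
        rw [Finset.sum_add_distrib, gauss, Finset.sum_const, Finset.card_range, smul_eq_mul]
    _ = (a + 1) * (b * (b + 1) / 2) + (b + 1) * ∑ i ∈ Finset.range (a+1), (a + 1 - i) := by
        rw [Finset.sum_add_distrib, Finset.sum_const, Finset.card_range, smul_eq_mul,
          Finset.mul_sum]
    _ = (a + 1) * (b * (b + 1) / 2) + (b + 1) * (a * (a + 1) / 2 + (a + 1)) := by
        congr 1
        congr 1
        rw [refl_sum, Finset.sum_add_distrib, gauss, Finset.sum_const,
          Finset.card_range, smul_eq_mul, mul_one]
    _ = (a + 1) * (b + 1) + (b + 1) * (a * (a + 1) / 2) + (a + 1) * (b * (b + 1) / 2) := by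
        ring
end

section
/- The map ω sending (α₀, α₁, β) to (α₀ + α₁, min(α₁, β − α₀), max(α₀, β − α₁)) is a bijection from the set of integer points satisfying 0 ≤ α₀ ≤ a, 0 ≤ α₁ ≤ b, α₀ ≤ β ≤ α₁ + a, onto the set of integer points (α, β₀, β₁) of the polytope P'(a,b) defined by 0 ≤ β₁ ≤ a, 0 ≤ β₀ ≤ b, β₀ ≤ α ≤ β₁ + b. -/
/-- Integer points of the polytope `P'(a,b)`, coordinates `(α, β₀, β₁)`. -/
def P'pts (a b : ℕ) : Set (ℤ × ℤ × ℤ) :=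
  {t | 0 ≤ t.2.2 ∧ t.2.2 ≤ (a : ℤ) ∧ 0 ≤ t.2.1 ∧ t.2.1 ≤ (b : ℤ) ∧
       t.2.1 ≤ t.1 ∧ t.1 ≤ t.2.2 + (b : ℤ)}

/-- The piecewise-linear map `ω : (α₀,α₁,β) ↦ (α₀+α₁, min(α₁,β−α₀), max(α₀,β−α₁))`. -/
def omegaMap (t : ℤ × ℤ × ℤ) : ℤ × ℤ × ℤ :=
  (t.1 + t.2.1, min t.2.1 (t.2.2 - t.1), max t.1 (t.2.2 - t.2.1))

/-- The inverse of `omegaMap`. -/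
def psiMap (t : ℤ × ℤ × ℤ) : ℤ × ℤ × ℤ :=
  (min t.2.2 (t.1 - t.2.1), max (t.1 - t.2.2) t.2.1, t.2.1 + t.2.2)

theorem stmt_7 (a b : ℕ) : Set.BijOn omegaMap (Ppts a b) (P'pts a b) := by
  have hinv : Set.InvOn psiMap omegaMap (Ppts a b) (P'pts a b) := by
    constructor
    · rintro ⟨x, y, z⟩ h
      simp only [Ppts, Set.mem_setOf_eq] at h
      simp only [omegaMap, psiMap, Prod.mk.injEq]
      omega
    · rintro ⟨x, y, z⟩ h
      simp only [P'pts, Set.mem_setOf_eq] at h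
      simp only [omegaMap, psiMap, Prod.mk.injEq]
      omega
  refine hinv.bijOn ?_ ?_
  · rintro ⟨x, y, z⟩ h
    simp only [Ppts, Set.mem_setOf_eq] at h
    simp only [P'pts, omegaMap, Set.mem_setOf_eq]
    omega
  · rintro ⟨x, y, z⟩ h
    simp only [P'pts, Set.mem_setOf_eq] at h
    simp only [Ppts, psiMap, Set.mem_setOf_eq]
    omega
end

section
/- The map (x,y,z) ↦ (b + max(z, y − x + a), x + z − a, min(x − a, y − z)) is a bijection from the set of integer Gelfand–Tsetlin arrays with border (a+b, a, 0), i.e., triples (x,y,z) with 0 ≤ z ≤ a, a ≤ x ≤ a+b, z ≤ y ≤ x, onto the set of integer Gelfand–Tsetlin arrays with border (a+b, b, 0), i.e., triples (x',y',z') with 0 ≤ z' ≤ b, b ≤ x' ≤ a+b, z' ≤ y' ≤ x'. -/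
/-- Integer Gelfand–Tsetlin arrays `(x,y,z)` with border `(a+b, a, 0)`. -/
def GTa (a b : ℕ) : Set (ℤ × ℤ × ℤ) :=
  {t | 0 ≤ t.2.2 ∧ t.2.2 ≤ (a : ℤ) ∧ (a : ℤ) ≤ t.1 ∧ t.1 ≤ (a : ℤ) + b ∧
       t.2.2 ≤ t.2.1 ∧ t.2.1 ≤ t.1}

/-- Integer Gelfand–Tsetlin arrays `(x',y',z')` with border `(a+b, b, 0)`. -/
def GTb (a b : ℕ) : Set (ℤ × ℤ × ℤ) :=
  {t | 0 ≤ t.2.2 ∧ t.2.2 ≤ (b : ℤ) ∧ (b : ℤ) ≤ t.1 ∧ t.1 ≤ (a : ℤ) + b ∧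
       t.2.2 ≤ t.2.1 ∧ t.2.1 ≤ t.1}

/-- The map `(x,y,z) ↦ (b + max(z, y−x+a), x+z−a, min(x−a, y−z))`. -/
def gtMap (a b : ℕ) (t : ℤ × ℤ × ℤ) : ℤ × ℤ × ℤ :=
  ((b : ℤ) + max t.2.2 (t.2.1 - t.1 + a), t.1 + t.2.2 - (a : ℤ),
    min (t.1 - (a : ℤ)) (t.2.1 - t.2.2))

lemma GT_swap (a b : ℕ) : GTb a b = GTa b a := by
  ext t
  simp only [GTa, GTb, Set.mem_setOf_eq]
  constructor <;> rintro ⟨h1,h2,h3,h4,h5,h6⟩ <;> exact ⟨h1,h2,h3,by omega,h5,h6⟩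

lemma gt_mapsTo (a b : ℕ) : Set.MapsTo (gtMap a b) (GTa a b) (GTb a b) := by
  rintro ⟨x, y, z⟩ ⟨h1, h2, h3, h4, h5, h6⟩
  simp only [GTa, GTb, gtMap, Set.mem_setOf_eq] at *
  refine ⟨?_, ?_, ?_, ?_, ?_, ?_⟩ <;> omega

lemma gt_leftInv (a b : ℕ) : Set.LeftInvOn (gtMap b a) (gtMap a b) (GTa a b) := by
  rintro ⟨x, y, z⟩ ⟨h1, h2, h3, h4, h5, h6⟩
  simp only [GTa, gtMap, Set.mem_setOf_eq, Prod.mk.injEq] at *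
  refine ⟨?_, ?_, ?_⟩ <;> omega

theorem stmt_9 (a b : ℕ) : Set.BijOn (gtMap a b) (GTa a b) (GTb a b) := by
  refine Set.InvOn.bijOn ⟨gt_leftInv a b, ?_⟩ (gt_mapsTo a b) ?_
  · have := gt_leftInv b a
    rw [← GT_swap a b] at this
    exact this
  · have := gt_mapsTo b a
    rw [← GT_swap a b, GT_swap b a] at this
    exact this
end

section
/- In the edge-structure on integer GT-arrays M with border (a+b,a,0) (edges as in (10)), the unique vertex with no incoming edge is (a, 0, 0) and the unique vertex with no outgoing edge is (a+b, a+b, a). -/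
/-- Integer Gelfand–Tsetlin arrays `(x,y,z)` with border `(a+b, a, 0)`. -/
def GTM (a b : ℕ) : Set (ℤ × ℤ × ℤ) :=
  {t | 0 ≤ t.2.2 ∧ t.2.2 ≤ (a : ℤ) ∧ (a : ℤ) ≤ t.1 ∧ t.1 ≤ (a : ℤ) + b ∧
       t.2.2 ≤ t.2.1 ∧ t.2.1 ≤ t.1}

/-- Condition for the 1-edge raising the entry `z`. -/
def zCond (a : ℕ) (u : ℤ × ℤ × ℤ) : Prop :=
  u.2.2 < (a : ℤ) ∧ u.2.2 < u.2.1 ∧ u.2.1 - u.2.2 > u.1 - (a : ℤ)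

/-- 1-edges on GT-arrays: raise `z` if `zCond` holds, otherwise raise `x`. -/
def gtE1 (a b : ℕ) (u v : ℤ × ℤ × ℤ) : Prop :=
  u ∈ GTM a b ∧ v ∈ GTM a b ∧
    ((zCond a u ∧ v = (u.1, u.2.1, u.2.2 + 1)) ∨
     (¬ zCond a u ∧ u.1 < (a : ℤ) + b ∧ v = (u.1 + 1, u.2.1, u.2.2)))

/-- 2-edges on GT-arrays: raise `y` when `y < x`. -/
def gtE2 (a b : ℕ) (u v : ℤ × ℤ × ℤ) : Prop :=
  u ∈ GTM a b ∧ v ∈ GTM a b ∧ u.2.1 < u.1 ∧ v = (u.1, u.2.1 + 1, u.2.2)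

/-- Edges of either color. -/
def gtE (a b : ℕ) (u v : ℤ × ℤ × ℤ) : Prop := gtE1 a b u v ∨ gtE2 a b u v

/-- The unique vertex with no incoming edge is `(a,0,0)`, and the unique vertex
with no outgoing edge is `(a+b, a+b, a)`. -/
theorem stmt_12 (a b : ℕ) :
    ((a : ℤ), (0 : ℤ), (0 : ℤ)) ∈ GTM a b ∧
    ((a : ℤ) + b, (a : ℤ) + b, (a : ℤ)) ∈ GTM a b ∧
    (∀ v ∈ GTM a b, (∀ u, ¬ gtE a b u v) ↔ v = ((a : ℤ), 0, 0)) ∧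
    (∀ v ∈ GTM a b, (∀ u, ¬ gtE a b v u) ↔ v = ((a : ℤ) + b, (a : ℤ) + b, (a : ℤ))) := by
  refine ⟨by simp [GTM] <;> omega,
          by simp [GTM] <;> omega, ?_, ?_⟩
  · rintro ⟨x, y, z⟩ hv
    have hv' := hv
    simp only [GTM, Set.mem_setOf_eq] at hv'
    constructor
    · intro h
      by_contra hne
      simp only [Prod.mk.injEq, not_and] at hne
      by_cases hy : z < y
      · exact h (x, y - 1, z) (Or.inr ⟨by simp [GTM] <;> omega, hv,
          by simp <;> omega, by simp [Prod.mk.injEq] <;> omega⟩)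
      · by_cases hx : (a : ℤ) < x
        · exact h (x - 1, y, z) (Or.inl ⟨by simp [GTM] <;> omega, hv,
            Or.inr ⟨by simp [zCond] <;> omega, by simp <;> omega,
              by simp [Prod.mk.injEq] <;> omega⟩⟩)
        · exact h (x, y, z - 1) (Or.inl ⟨by simp [GTM] <;> omega, hv,
            Or.inl ⟨by simp [zCond] <;> omega, by simp [Prod.mk.injEq] <;> omega⟩⟩)
    · intro heq ⟨p, q, r⟩ hedge
      simp only [Prod.mk.injEq] at heq
      obtain ⟨rfl, rfl, rfl⟩ := heq
      simp only [gtE, gtE1, gtE2, GTM, zCond, Set.mem_setOf_eq, Prod.mk.injEq] at hedge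
      omega
  · rintro ⟨x, y, z⟩ hv
    have hv' := hv
    simp only [GTM, Set.mem_setOf_eq] at hv'
    constructor
    · intro h
      by_contra hne
      simp only [Prod.mk.injEq, not_and] at hne
      by_cases hy : y < x
      · exact h (x, y + 1, z) (Or.inr ⟨hv, by simp [GTM] <;> omega,
          hy, rfl⟩)
      · by_cases hz : z < (a : ℤ)
        · exact h (x, y, z + 1) (Or.inl ⟨hv, by simp [GTM] <;> omega,
            Or.inl ⟨by simp [zCond] <;> omega, rfl⟩⟩)
        · exact h (x + 1, y, z) (Or.inl ⟨hv, by simp [GTM] <;> omega,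
            Or.inr ⟨by simp [zCond] <;> omega, by omega, rfl⟩⟩)
    · intro heq ⟨p, q, r⟩ hedge
      simp only [Prod.mk.injEq] at heq
      obtain ⟨rfl, rfl, rfl⟩ := heq
      simp only [gtE, gtE1, gtE2, GTM, zCond, Set.mem_setOf_eq, Prod.mk.injEq] at hedge
      omega
end

section
/- In the crystal graph on integer GT-arrays with border (a+b,a,0), every vertex is reachable by a directed path from the source (a,0,0); consequently the graph is connected. -/
/-! The array `(x, y, z)` is reached from `(a, 0, 0)` by raising, in turn, `y` from `0` to `z`
and `z` from `0` to `z` along the wall `x = a` (where the `z`-rule fires exactly while `z < y`),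
then `x` from `a` to `x` along the diagonal `y = z` (where it never fires), and finally `y`
from `z` to `y`. Any two arrays are connected through the source. -/

open Relation

theorem Relation.ReflTransGen.exists_path {α : Type*} {r : α → α → Prop} {x y : α}
    (h : ReflTransGen r x y) :
    ∃ (n : ℕ) (f : ℕ → α), f 0 = x ∧ f n = y ∧ ∀ k < n, r (f k) (f (k + 1)) := by
  induction h with
  | refl => exact ⟨0, fun _ => x, rfl, rfl, by simp⟩
  | @tail y z _ hyz ih =>
    obtain ⟨n, f, hf0, hfn, hf⟩ := ih
    refine ⟨n + 1, Function.update f (n + 1) z, by simp [hf0], by simp, fun k hk => ?_⟩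
    rcases Nat.lt_succ_iff_lt_or_eq.mp hk with hk | rfl
    · rw [Function.update_of_ne (by omega), Function.update_of_ne (by omega)]
      exact hf k hk
    · rw [Function.update_of_ne (by omega), Function.update_self, hfn]
      exact hyz

theorem Relation.reflTransGen_symmGen_of_common_source {α : Type*}
    {r : α → α → Prop} {s u v : α} (hu : ReflTransGen r s u) (hv : ReflTransGen r s v) :
    ReflTransGen (SymmGen r) u v :=
  have lift : ReflTransGen r ≤ ReflTransGen (SymmGen r) := ReflTransGen.mono fun _ _ => Or.inl
  (Std.Symm.symm _ _ (lift _ _ hu)).trans (lift _ _ hv)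

theorem reflTransGen_of_int_succ {α : Type*} {r : α → α → Prop} (f : ℤ → α) {m n : ℤ}
    (hmn : m ≤ n) (h : ∀ i, m ≤ i → i < n → r (f i) (f (i + 1))) :
    ReflTransGen r (f m) (f n) :=
  ReflTransGen.lift f (fun _ _ h => h) _ _ <|
    reflTransGen_of_succ_of_le (fun i j => r (f i) (f j))
      (fun i hi => by simpa using h i hi.1 hi.2) hmn

section GelfandTsetlin

variable {a b : ℕ}

theorem reflTransGen_gtE_raise_y {x y₀ y₁ z : ℤ} (h₀ : (x, y₀, z) ∈ GTM a b)
    (h₁ : (x, y₁, z) ∈ GTM a b) (hy : y₀ ≤ y₁) :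
    ReflTransGen (gtE a b) (x, y₀, z) (x, y₁, z) := by
  simp only [GTM, Set.mem_ofPred_eq] at h₀ h₁
  refine reflTransGen_of_int_succ (fun t => (x, t, z)) hy fun i hi hi' =>
    Or.inr ⟨?_, ?_, ?_, rfl⟩ <;> simp only [GTM, Set.mem_ofPred_eq] <;> omega

theorem reflTransGen_gtE_raise_z {y z₀ z₁ : ℤ} (h₀ : ((a : ℤ), y, z₀) ∈ GTM a b)
    (h₁ : ((a : ℤ), y, z₁) ∈ GTM a b) (hz : z₀ ≤ z₁) :
    ReflTransGen (gtE a b) (a, y, z₀) (a, y, z₁) := by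
  simp only [GTM, Set.mem_ofPred_eq] at h₀ h₁
  refine reflTransGen_of_int_succ (fun t => ((a : ℤ), y, t)) hz fun i hi hi' =>
    Or.inl ⟨?_, ?_, Or.inl ⟨?_, rfl⟩⟩ <;> simp only [GTM, zCond, Set.mem_ofPred_eq] <;> omega

theorem reflTransGen_gtE_raise_x {x₀ x₁ y : ℤ} (h₀ : (x₀, y, y) ∈ GTM a b)
    (h₁ : (x₁, y, y) ∈ GTM a b) (hx : x₀ ≤ x₁) :
    ReflTransGen (gtE a b) (x₀, y, y) (x₁, y, y) := by
  simp only [GTM, Set.mem_ofPred_eq] at h₀ h₁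
  refine reflTransGen_of_int_succ (fun t => (t, y, y)) hx fun i hi hi' =>
    Or.inl ⟨?_, ?_, Or.inr ⟨?_, ?_, rfl⟩⟩ <;> simp only [GTM, zCond, Set.mem_ofPred_eq] <;> omega

theorem reflTransGen_gtE_source {v : ℤ × ℤ × ℤ} (hv : v ∈ GTM a b) :
    ReflTransGen (gtE a b) ((a : ℤ), 0, 0) v := by
  obtain ⟨x, y, z⟩ := v
  obtain ⟨hz, hza, hax, hxb, hzy, hyx⟩ : 0 ≤ z ∧ z ≤ a ∧ a ≤ x ∧ x ≤ a + b ∧ z ≤ y ∧ y ≤ x := hv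
  have mem : ∀ {x' y' z' : ℤ},
      0 ≤ z' ∧ z' ≤ a ∧ a ≤ x' ∧ x' ≤ a + b ∧ z' ≤ y' ∧ y' ≤ x' → (x', y', z') ∈ GTM a b := id
  have raise_y₁ : ReflTransGen (gtE a b) ((a : ℤ), 0, 0) (a, z, 0) :=
    reflTransGen_gtE_raise_y (mem (by omega)) (mem (by omega)) hz
  have raise_z : ReflTransGen (gtE a b) ((a : ℤ), z, 0) (a, z, z) :=
    reflTransGen_gtE_raise_z (mem (by omega)) (mem (by omega)) hz
  have raise_x : ReflTransGen (gtE a b) ((a : ℤ), z, z) (x, z, z) :=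
    reflTransGen_gtE_raise_x (mem (by omega)) (mem (by omega)) hax
  have raise_y₂ : ReflTransGen (gtE a b) (x, z, z) (x, y, z) :=
    reflTransGen_gtE_raise_y (mem (by omega)) (mem (by omega)) hzy
  exact raise_y₁.trans <| raise_z.trans <| raise_x.trans raise_y₂

end GelfandTsetlin

/-- Every GT-array is reachable by a directed path from the source `(a,0,0)`;
consequently the crystal graph is connected. -/
theorem stmt_14 (a b : ℕ) :
    (∀ v ∈ GTM a b, ∃ (n : ℕ) (f : ℕ → ℤ × ℤ × ℤ),
      f 0 = ((a : ℤ), 0, 0) ∧ f n = v ∧ ∀ k < n, gtE a b (f k) (f (k + 1))) ∧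
    (∀ u ∈ GTM a b, ∀ v ∈ GTM a b,
      Relation.ReflTransGen (fun x y => gtE a b x y ∨ gtE a b y x) u v) :=
  ⟨fun _ hv => (reflTransGen_gtE_source hv).exists_path, fun _ hu _ hv =>
    reflTransGen_symmGen_of_common_source (reflTransGen_gtE_source hu)
      (reflTransGen_gtE_source hv)⟩
end

section
/- Define a partial order on pairs of quadruples: u ⪯ v iff (a) β₁(u) ≤ α₀(v) and α₁(u) ≤ β₀(v), or (b) α₀(u) = α₀(v) = β₁(u) = β₁(v), α₁(u) ≤ α₁(v), β₀(u) ≤ β₀(v), or (c) α₁(u) = α₁(v) = β₀(u) = β₀(v), α₀(u) ≤ α₀(v), β₁(u) ≤ β₁(v). On the set of quadruples (α₀, α₁, β₀, β₁) ∈ ℤ⁴ with 0 ≤ α₀ ≤ β₁ ≤ a, 0 ≤ β₀ ≤ α₁ ≤ b, and (α₀ = β₁ or β₀ = α₁), the relation ⪯ is reflexive, antisymmetric, and transitive. -/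
/-- Quadruples `(α₀, α₁, β₀, β₁)` encoding vertices of `K(a,b)`. -/
def quadSet (a b : ℕ) : Set (ℤ × ℤ × ℤ × ℤ) :=
  {q | 0 ≤ q.1 ∧ q.1 ≤ q.2.2.2 ∧ q.2.2.2 ≤ (a : ℤ) ∧
       0 ≤ q.2.2.1 ∧ q.2.2.1 ≤ q.2.1 ∧ q.2.1 ≤ (b : ℤ) ∧
       (q.1 = q.2.2.2 ∨ q.2.2.1 = q.2.1)}

/-- The order relation on quadruples `u = (α₀(u), α₁(u), β₀(u), β₁(u))`. -/
def quadLe (u v : ℤ × ℤ × ℤ × ℤ) : Prop :=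
  (u.2.2.2 ≤ v.1 ∧ u.2.1 ≤ v.2.2.1) ∨
  (u.1 = v.1 ∧ u.1 = u.2.2.2 ∧ v.1 = v.2.2.2 ∧ u.2.1 ≤ v.2.1 ∧ u.2.2.1 ≤ v.2.2.1) ∨
  (u.2.1 = v.2.1 ∧ u.2.1 = u.2.2.1 ∧ v.2.1 = v.2.2.1 ∧ u.1 ≤ v.1 ∧ u.2.2.2 ≤ v.2.2.2)

/-- On `quadSet a b`, the relation `quadLe` is reflexive, antisymmetric and
transitive. -/
theorem stmt_15 (a b : ℕ) :
    (∀ u ∈ quadSet a b, quadLe u u) ∧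
    (∀ u ∈ quadSet a b, ∀ v ∈ quadSet a b, quadLe u v → quadLe v u → u = v) ∧
    (∀ u ∈ quadSet a b, ∀ v ∈ quadSet a b, ∀ w ∈ quadSet a b,
      quadLe u v → quadLe v w → quadLe u w) := by
  refine ⟨?_, ?_, ?_⟩
  · rintro ⟨u0,u1,u2,u3⟩ hu
    simp only [quadSet, Set.mem_setOf_eq] at hu
    unfold quadLe; dsimp only
    omega
  · rintro ⟨u0,u1,u2,u3⟩ hu ⟨v0,v1,v2,v3⟩ hv h1 h2
    simp only [quadSet, Set.mem_setOf_eq] at hu hv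
    unfold quadLe at h1 h2; dsimp only at h1 h2
    simp only [Prod.mk.injEq]
    omega
  · rintro ⟨u0,u1,u2,u3⟩ hu ⟨v0,v1,v2,v3⟩ hv ⟨w0,w1,w2,w3⟩ hw h1 h2
    simp only [quadSet, Set.mem_setOf_eq] at hu hv hw
    unfold quadLe at h1 h2 ⊢; dsimp only at h1 h2 ⊢
    omega
end
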